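/- On the Poincaré disk with metric G of curvature -1, the Hesse function Λ_B(u) = (B,Ξ(u)) satisfies the eikonal-type identity ⟨dΛ_B, dΛ_B⟩_G = Λ_B² + (B,B), where (B,B) is the Minkowski norm of B ∈ ℝ³. -/

import Mathlib

/-!
Write Λ_B = N / D with N = -B₀(1 + |x|²) + 2(B₁x₀ + B₂x₁) and D = 1 - |x|²; both have the shape
a + ⟨b, x⟩ + c|x|², so the quotient rule gives ∂ᵢΛ_B = 2(B_{i+1} - B₀xᵢ + xᵢΛ_B) / D.
The factor D²/4 of the inverse metric cancels the denominators, and expanding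
Σᵢ (B_{i+1} - B₀xᵢ + xᵢΛ_B)² with Λ_B D = N leaves Λ_B² - B₀² + B₁² + B₂².
-/

/-- Partial derivative ∂_i f at x. -/
noncomputable def pd {n : ℕ} (i : Fin n) (f : (Fin n → ℝ) → ℝ) (x : Fin n → ℝ) : ℝ :=
  fderiv ℝ f x (Pi.single i 1)

open Finset in
/-- Christoffel symbols Γ^i_{jk} of the Levi-Civita connection of the metric g
(with inverse ginv), in local coordinates. -/
noncomputable def Gamma {n : ℕ} (g ginv : (Fin n → ℝ) → Matrix (Fin n) (Fin n) ℝ)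
    (x : Fin n → ℝ) (i j k : Fin n) : ℝ :=
  (1 / 2) * ∑ l, ginv x i l *
    (pd j (fun y => g y l k) x + pd k (fun y => g y l j) x - pd l (fun y => g y j k) x)
/-- The open unit disk in ℝ² ≅ ℂ. -/
def diskR : Set (Fin 2 → ℝ) := {x | x 0 ^ 2 + x 1 ^ 2 < 1}

/-- The Poincaré metric G = 4|du|²/(1-|u|²)² (Gaussian curvature -1) on the unit disk. -/
noncomputable def gP (x : Fin 2 → ℝ) : Matrix (Fin 2) (Fin 2) ℝ :=
  fun i j => if i = j then 4 / (1 - (x 0 ^ 2 + x 1 ^ 2)) ^ 2 else 0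

/-- The inverse Poincaré metric. -/
noncomputable def gPinv (x : Fin 2 → ℝ) : Matrix (Fin 2) (Fin 2) ℝ :=
  fun i j => if i = j then (1 - (x 0 ^ 2 + x 1 ^ 2)) ^ 2 / 4 else 0

/-- The Minkowski pairing of signature (1,2) on ℝ³. -/
noncomputable def mink (x y : Fin 3 → ℝ) : ℝ := -(x 0 * y 0) + x 1 * y 1 + x 2 * y 2

/-- The Weierstrass map Ξ in real coordinates on the unit disk. -/
noncomputable def XiR (x : Fin 2 → ℝ) : Fin 3 → ℝ :=
  ![(1 + (x 0 ^ 2 + x 1 ^ 2)) / (1 - (x 0 ^ 2 + x 1 ^ 2)),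
    2 * x 0 / (1 - (x 0 ^ 2 + x 1 ^ 2)),
    2 * x 1 / (1 - (x 0 ^ 2 + x 1 ^ 2))]

/-- Λ_B = (B, Ξ(·)). -/
noncomputable def LB (B : Fin 3 → ℝ) (x : Fin 2 → ℝ) : ℝ := mink B (XiR x)

section PartialDerivative

variable {n : ℕ} {f g : (Fin n → ℝ) → ℝ} {x : Fin n → ℝ}

theorem pd_div (i : Fin n) (hf : DifferentiableAt ℝ f x) (hg : DifferentiableAt ℝ g x)
    (hgx : g x ≠ 0) :
    pd i (fun y => f y / g y) x = (pd i f x * g x - f x * pd i g x) / g x ^ 2 := by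
  have h := hf.hasFDerivAt.mul ((hasDerivAt_inv hgx).comp_hasFDerivAt x hg.hasFDerivAt)
  simp only [Function.comp_def] at h
  rw [pd, show (fun y => f y / g y) = f * fun y => (g y)⁻¹ by rfl, h.fderiv, pd, pd]
  simp only [add_apply, smul_apply, smul_eq_mul]
  field_simp
  ring

def affinePlusSqNorm (a : ℝ) (b : Fin n → ℝ) (c : ℝ) (y : Fin n → ℝ) : ℝ :=
  a + ∑ j, b j * y j + c * ∑ j, y j ^ 2

theorem differentiableAt_affinePlusSqNorm (a : ℝ) (b : Fin n → ℝ) (c : ℝ) :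
    DifferentiableAt ℝ (affinePlusSqNorm a b c) x := by
  unfold affinePlusSqNorm; fun_prop

theorem pd_affinePlusSqNorm (i : Fin n) (a : ℝ) (b : Fin n → ℝ) (c : ℝ) :
    pd i (affinePlusSqNorm a b c) x = b i + 2 * c * x i := by
  have h := ((hasFDerivAt_const a x).add (HasFDerivAt.fun_sum (u := Finset.univ) fun j _ =>
      (hasFDerivAt_apply (𝕜 := ℝ) j x).const_mul (b j))).add
    ((HasFDerivAt.fun_sum (u := Finset.univ) fun j _ =>
      (hasFDerivAt_apply (𝕜 := ℝ) j x).pow 2).const_mul c)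
  rw [pd, HasFDerivAt.fderiv (f := affinePlusSqNorm a b c) h]
  simp [Pi.single_apply, mul_left_comm c, mul_assoc]

end PartialDerivative

theorem sum_gPinv_mul_mul (x a : Fin 2 → ℝ) :
    ∑ i, ∑ j, gPinv x i j * a i * a j = (1 - (x 0 ^ 2 + x 1 ^ 2)) ^ 2 / 4 * (a 0 ^ 2 + a 1 ^ 2) := by
  simp only [gPinv, ite_mul, zero_mul, Finset.sum_ite_eq, Finset.mem_univ, if_true,
    Fin.sum_univ_two]
  ring

theorem affinePlusSqNorm_one_zero_neg_one (x : Fin 2 → ℝ) :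
    affinePlusSqNorm 1 0 (-1) x = 1 - (x 0 ^ 2 + x 1 ^ 2) := by
  simp only [affinePlusSqNorm, Fin.sum_univ_two, Pi.zero_apply, zero_mul, add_zero]
  ring

theorem affinePlusSqNorm_LB_numerator (B : Fin 3 → ℝ) (x : Fin 2 → ℝ) :
    affinePlusSqNorm (-B 0) (fun j => 2 * B j.succ) (-B 0) x
      = -(B 0 * (1 + (x 0 ^ 2 + x 1 ^ 2))) + 2 * (B 1 * x 0 + B 2 * x 1) := by
  simp only [affinePlusSqNorm, Fin.sum_univ_two, Fin.succ_zero_eq_one, Fin.succ_one_eq_two]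
  ring

section PoincareDisk

variable {x : Fin 2 → ℝ}

theorem one_sub_normSq_ne_zero (hx : x ∈ diskR) : 1 - (x 0 ^ 2 + x 1 ^ 2) ≠ 0 :=
  (sub_pos.2 hx).ne'

theorem LB_eq_div (B : Fin 3 → ℝ) :
    LB B = fun y =>
      affinePlusSqNorm (-B 0) (fun j => 2 * B j.succ) (-B 0) y / affinePlusSqNorm 1 0 (-1) y := by
  funext y
  rw [affinePlusSqNorm_LB_numerator, affinePlusSqNorm_one_zero_neg_one]
  simp only [LB, mink, XiR, Matrix.cons_val]
  ring

theorem LB_mul_one_sub_normSq (B : Fin 3 → ℝ) (hx : x ∈ diskR) :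
    LB B x * (1 - (x 0 ^ 2 + x 1 ^ 2))
      = -(B 0 * (1 + (x 0 ^ 2 + x 1 ^ 2))) + 2 * (B 1 * x 0 + B 2 * x 1) := by
  rw [congrFun (LB_eq_div B) x, affinePlusSqNorm_LB_numerator, affinePlusSqNorm_one_zero_neg_one]
  exact div_mul_cancel₀ _ (one_sub_normSq_ne_zero hx)

theorem pd_LB (B : Fin 3 → ℝ) (hx : x ∈ diskR) (i : Fin 2) :
    pd i (LB B) x = 2 * (B i.succ - B 0 * x i + x i * LB B x) / (1 - (x 0 ^ 2 + x 1 ^ 2)) := by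
  have hD := one_sub_normSq_ne_zero hx
  conv_lhs => rw [LB_eq_div]
  rw [pd_div i (differentiableAt_affinePlusSqNorm _ _ _) (differentiableAt_affinePlusSqNorm _ _ _)
      (by rwa [affinePlusSqNorm_one_zero_neg_one]),
    pd_affinePlusSqNorm, pd_affinePlusSqNorm, affinePlusSqNorm_LB_numerator,
    affinePlusSqNorm_one_zero_neg_one,
    ← LB_mul_one_sub_normSq B hx, Pi.zero_apply]
  field_simp
  ring

theorem LB_eikonal_sum_sq (B : Fin 3 → ℝ) (hx : x ∈ diskR) :
    (B 1 - B 0 * x 0 + x 0 * LB B x) ^ 2 + (B 2 - B 0 * x 1 + x 1 * LB B x) ^ 2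
      = LB B x ^ 2 + mink B B := by
  unfold mink
  linear_combination (B 0 - LB B x) * LB_mul_one_sub_normSq B hx

end PoincareDisk

open Finset in
/-- on the Poincaré disk of curvature -1, the Hesse function
Λ_B = (B,Ξ(·)) satisfies the eikonal-type identity ⟨dΛ_B,dΛ_B⟩_G = Λ_B² + (B,B). -/
theorem LB_eikonal_identity (B : Fin 3 → ℝ) (x : Fin 2 → ℝ) (hx : x ∈ diskR) :
    (∑ i, ∑ j, gPinv x i j * pd i (LB B) x * pd j (LB B) x)
      = (LB B x) ^ 2 + mink B B := by
  rw [sum_gPinv_mul_mul, pd_LB B hx, pd_LB B hx, ← LB_eikonal_sum_sq B hx]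
  simp only [Fin.succ_zero_eq_one, Fin.succ_one_eq_two]
  field_simp [one_sub_normSq_ne_zero hx]
  ring
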